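/- For all c > 1: ∫φ_c² = (c−1)^{3/2}·c^{1/2}·∫Q²; ∫φ_c³ = (6/5)·(c−1)·∫φ_c²; ∫(φ_c')² = (1/5)·((c−1)/c)·∫φ_c²; E(φ_c) = (1/2)·(1 + (4/5)(c−1))·∫φ_c²; N(φ_c) = (1/2)·((1/5)·((c−1)/c) + 1)·∫φ_c²; E(φ_c) − c·N(φ_c) = −(1/5)·(c−1)·∫φ_c²; and (d/dc)E(φ_c) = c·(d/dc)N(φ_c) > 0. -/

import Mathlib

open Real MeasureTheory Filter

noncomputable section

/-- `Qs x = (3/2) * sech²(x/2)`. -/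
def Qs (x : ℝ) : ℝ := (3/2) * (1 / Real.cosh (x/2))^2

/-- The solitary wave profile `φ_c`. -/
def phic (c : ℝ) (x : ℝ) : ℝ := (c - 1) * Qs (Real.sqrt ((c - 1)/c) * x)

/-- The linearized operator `L f = -f'' + f - 2 Q f`. -/
def Lop (f : ℝ → ℝ) (x : ℝ) : ℝ := -(iteratedDeriv 2 f x) + f x - 2 * Qs x * f x

/-- `φ = -Q'/Q`. -/
def phi0 (x : ℝ) : ℝ := -(deriv Qs x / Qs x)

/-- `P_λ = 2Q + ((3-λ)/2) x Q'`. -/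
def Pl (lam : ℝ) (x : ℝ) : ℝ := 2 * Qs x + ((3 - lam)/2) * x * deriv Qs x

/-- The space `𝒴` of smooth functions with exponential decay of all derivatives. -/
def inY (f : ℝ → ℝ) : Prop :=
  ContDiff ℝ (⊤ : ℕ∞) f ∧ ∀ j : ℕ, ∃ K r : ℝ, 0 < K ∧ 0 < r ∧
    ∀ x : ℝ, |iteratedDeriv j f x| ≤ K * (1 + |x|) ^ r * Real.exp (-|x|)

/-- The `H¹(ℝ)` norm. -/
def H1norm (v : ℝ → ℝ) : ℝ := Real.sqrt (∫ x : ℝ, ((v x)^2 + (deriv v x)^2))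

/-- The `H¹` norm restricted to a set. -/
def H1normOn (s : Set ℝ) (v : ℝ → ℝ) : ℝ :=
  Real.sqrt (∫ x in s, ((v x)^2 + (deriv v x)^2))

/-- The weighted norm `H¹_c`. -/
def H1cnorm (c : ℝ) (v : ℝ → ℝ) : ℝ :=
  Real.sqrt (∫ x : ℝ, ((deriv v x)^2 + (c - 1) * (v x)^2))

/-- The `L²(ℝ)` norm. -/
def L2norm (v : ℝ → ℝ) : ℝ := Real.sqrt (∫ x : ℝ, (v x)^2)

/-- The BBM residual `(1-∂ₓ²)∂ₜu + ∂ₓ(u+u²)` at `(t,x)`. -/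
def bbmRes (u : ℝ → ℝ → ℝ) (t x : ℝ) : ℝ :=
  deriv (fun s => u s x) t
    - iteratedDeriv 2 (fun y => deriv (fun s => u s y) t) x
    + deriv (fun y => u t y + (u t y)^2) x

/-- An `H¹` solution of the BBM equation. -/
def IsBBMSol (u : ℝ → ℝ → ℝ) : Prop :=
  (Continuous fun p : ℝ × ℝ => u p.1 p.2) ∧
  (∀ t : ℝ, Integrable (fun x => (u t x)^2) ∧ Integrable (fun x => (deriv (u t) x)^2)) ∧
  (∀ t x : ℝ, bbmRes u t x = 0)

/-- The energy `E(u) = ∫ (u²/2 + u³/3)`. -/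
def Efun (u : ℝ → ℝ) : ℝ := ∫ x : ℝ, ((u x)^2/2 + (u x)^3/3)

/-- `N(u) = (1/2) ∫ (uₓ² + u²)`. -/
def Nfun (u : ℝ → ℝ) : ℝ := (1/2) * ∫ x : ℝ, ((deriv u x)^2 + (u x)^2)

/-- The collision time scale `T`. -/
def Tcol (c1 c2 : ℝ) : ℝ :=
  ((c2 - 1)/c2) ^ (-(1/2 : ℝ) - 1/100)
    * ((1 - (c1 - 1)/c1)/((c1 - 1)/c1)) * ((c1 - 1)/c1) ^ ((1 : ℝ)/100)

/-- The index set `Σ₀ = {(k,l) : k ≥ 1, k+l ≤ 3}`. -/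
def Sigma0 : Finset (ℕ × ℕ) :=
  (Finset.range 4 ×ˢ Finset.range 4).filter (fun p => 1 ≤ p.1 ∧ p.1 + p.2 ≤ 3)

end

/-!
Substituting `t = tanh (x / 2)` gives `Q = (3/2)(1 - t²)`, `Q' = -(3/2) t (1 - t²)` and
`dx = 2 dt / (1 - t²)`, so `∫ Q²`, `∫ Q³` and `∫ Q'²` are polynomial integrals over `[-1, 1]`,
equal to `6`, `36/5` and `6/5`. Rescaling `x ↦ √((c - 1)/c) x` expresses every integral of `φ_c`
through these, and `c ↦ ∫ φ_c² ∝ (c - 1)^{3/2} c^{1/2}` has logarithmic derivative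
`3/(2(c - 1)) + 1/(2c)`, from which both derivatives follow.
-/

open Topology Set

namespace Real

theorem inv_cosh_sq (x : ℝ) : (cosh x)⁻¹ ^ 2 = 1 - tanh x ^ 2 := by
  have := (cosh_pos x).ne'
  rw [tanh_eq_sinh_div_cosh]
  field_simp
  linear_combination (-1) * cosh_sq x

theorem hasDerivAt_tanh (x : ℝ) : HasDerivAt tanh (1 - tanh x ^ 2) x := by
  have := (cosh_pos x).ne'
  rw [show tanh = fun y => sinh y / cosh y from funext tanh_eq_sinh_div_cosh]
  refine ((hasDerivAt_sinh x).div (hasDerivAt_cosh x) this).congr_deriv ?_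
  field_simp

theorem tendsto_tanh_atTop : Tendsto tanh atTop (𝓝 1) := by
  have h : ∀ x, tanh x = (1 - (exp x)⁻¹ ^ 2) / (1 + (exp x)⁻¹ ^ 2) := fun x => by
    have := (exp_pos x).ne'
    rw [tanh_eq, exp_neg]
    field_simp
  have hc : Continuous fun y : ℝ => (1 - y ^ 2) / (1 + y ^ 2) :=
    by fun_prop (disch := intro y; positivity)
  rw [funext h]
  convert (hc.tendsto 0).comp (tendsto_inv_atTop_zero.comp tendsto_exp_atTop) using 2 <;> norm_num

theorem tendsto_tanh_atBot : Tendsto tanh atBot (𝓝 (-1)) := by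
  simpa [Function.comp_def] using tendsto_tanh_atTop.neg.comp tendsto_neg_atBot_atTop

end Real

theorem integrable_of_hasDerivAt_of_nonneg_of_tendsto {F f : ℝ → ℝ} {a b : ℝ}
    (hF : ∀ x, HasDerivAt F (f x) x) (hf : ∀ x, 0 ≤ f x)
    (hbot : Tendsto F atBot (𝓝 a)) (htop : Tendsto F atTop (𝓝 b)) : Integrable f := by
  have hIoi : IntegrableOn f (Ioi 0) :=
    integrableOn_Ioi_deriv_of_nonneg' (fun x _ => hF x) (fun x _ => hf x) htop
  have hIio : IntegrableOn f (Iio 0) := by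
    have hG : ∀ x, HasDerivAt (fun x => -F (-x)) (f (-x)) x := fun x =>
      ((hF (-x)).comp x (hasDerivAt_neg' x)).neg.congr_deriv (by ring)
    have := integrableOn_Ioi_deriv_of_nonneg' (a := 0) (fun x _ => hG x) (fun x _ => hf (-x))
      (hbot.comp tendsto_neg_atTop_atBot).neg
    rw [← (Measure.measurePreserving_neg volume).integrableOn_comp_preimage
      (Homeomorph.neg ℝ).measurableEmbedding]
    simpa [Function.comp_def] using this
  rw [← integrableOn_univ, ← Iio_union_Ici]
  exact hIio.union (by rwa [integrableOn_Ici_iff_integrableOn_Ioi])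

theorem integral_comp_mul_deriv_of_tendsto {φ φ' g : ℝ → ℝ} {a b : ℝ}
    (hφ : ∀ x, HasDerivAt φ (φ' x) x) (hg : Continuous g) (hnonneg : ∀ x, 0 ≤ g (φ x) * φ' x)
    (hbot : Tendsto φ atBot (𝓝 a)) (htop : Tendsto φ atTop (𝓝 b)) :
    Integrable (fun x => g (φ x) * φ' x) ∧ ∫ x, g (φ x) * φ' x = ∫ t in a..b, g t := by
  set G := fun s => ∫ t in (0 : ℝ)..s, g t
  have hG : ∀ s, HasDerivAt G (g s) s := fun s => (hg.integral_hasStrictDerivAt 0 s).hasDerivAt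
  have hGφ : ∀ x, HasDerivAt (G ∘ φ) (g (φ x) * φ' x) x := fun x => (hG (φ x)).comp x (hφ x)
  have hGc : Continuous G := continuous_iff_continuousAt.2 fun s => (hG s).continuousAt
  have hGbot := (hGc.tendsto a).comp hbot
  have hGtop := (hGc.tendsto b).comp htop
  have hint := integrable_of_hasDerivAt_of_nonneg_of_tendsto hGφ hnonneg hGbot hGtop
  refine ⟨hint, (integral_of_hasDerivAt_of_tendsto hGφ hint hGbot hGtop).trans ?_⟩
  exact intervalIntegral.integral_interval_sub_left (hg.intervalIntegrable _ _)
    (hg.intervalIntegrable _ _)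

theorem hasDerivAt_tanh_half (x : ℝ) :
    HasDerivAt (fun y => tanh (y / 2)) ((1 - tanh (x / 2) ^ 2) / 2) x := by
  have := (hasDerivAt_tanh (x / 2)).comp x ((hasDerivAt_id' x).div_const 2)
  exact this.congr_deriv (by ring)

theorem integral_comp_tanh_half {g : ℝ → ℝ} (hg : Continuous g) (hg0 : ∀ t, t ^ 2 < 1 → 0 ≤ g t) :
    Integrable (fun x => g (tanh (x / 2)) * ((1 - tanh (x / 2) ^ 2) / 2)) ∧
      ∫ x, g (tanh (x / 2)) * ((1 - tanh (x / 2) ^ 2) / 2) = ∫ t in (-1)..1, g t := by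
  refine integral_comp_mul_deriv_of_tendsto hasDerivAt_tanh_half hg (fun x => ?_)
    (tendsto_tanh_atBot.comp (tendsto_id.atBot_div_const two_pos))
    (tendsto_tanh_atTop.comp (tendsto_id.atTop_div_const two_pos))
  have := tanh_sq_lt_one (x / 2)
  exact mul_nonneg (hg0 _ this) (by linarith)

theorem Qs_eq_tanh (x : ℝ) : Qs x = 3 / 2 * (1 - tanh (x / 2) ^ 2) := by
  rw [Qs, one_div, inv_cosh_sq]

theorem hasDerivAt_Qs (x : ℝ) :
    HasDerivAt Qs (-(3 / 2) * tanh (x / 2) * (1 - tanh (x / 2) ^ 2)) x := by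
  rw [show Qs = fun y => 3 / 2 * (1 - tanh (y / 2) ^ 2) from funext Qs_eq_tanh]
  exact ((((hasDerivAt_tanh_half x).pow 2).const_sub 1).const_mul (3 / 2)).congr_deriv (by ring)

theorem integral_Qs_sq : Integrable (fun x => Qs x ^ 2) ∧ ∫ x, Qs x ^ 2 = 6 := by
  have h := integral_comp_tanh_half (g := fun t => 9 / 2 * (1 - t ^ 2)) (by fun_prop)
    (fun t ht => by linarith)
  have heq : (fun x => Qs x ^ 2) = fun x =>
      9 / 2 * (1 - tanh (x / 2) ^ 2) * ((1 - tanh (x / 2) ^ 2) / 2) :=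
    funext fun x => by rw [Qs_eq_tanh]; ring
  rw [heq, h.2]
  exact ⟨h.1, by norm_num [intervalIntegral.integral_sub, integral_pow]⟩

theorem integral_Qs_cube : Integrable (fun x => Qs x ^ 3) ∧ ∫ x, Qs x ^ 3 = 36 / 5 := by
  have h := integral_comp_tanh_half (g := fun t => 27 / 4 * ((1 + t ^ 4) - 2 * t ^ 2))
    (by fun_prop) (fun t _ => by nlinarith [sq_nonneg (1 - t ^ 2)])
  have heq : (fun x => Qs x ^ 3) = fun x =>
      27 / 4 * ((1 + tanh (x / 2) ^ 4) - 2 * tanh (x / 2) ^ 2) * ((1 - tanh (x / 2) ^ 2) / 2) :=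
    funext fun x => by rw [Qs_eq_tanh]; ring
  rw [heq, h.2]
  exact ⟨h.1, by norm_num [intervalIntegral.integral_sub, intervalIntegral.integral_add,
    integral_pow, intervalIntegral.integral_const_mul]⟩

theorem integral_deriv_Qs_sq :
    Integrable (fun x => deriv Qs x ^ 2) ∧ ∫ x, deriv Qs x ^ 2 = 6 / 5 := by
  have h := integral_comp_tanh_half (g := fun t => 9 / 2 * (t ^ 2 - t ^ 4))
    (by fun_prop) (fun t ht => by nlinarith [sq_nonneg t])
  have heq : (fun x => deriv Qs x ^ 2) = fun x =>
      9 / 2 * (tanh (x / 2) ^ 2 - tanh (x / 2) ^ 4) * ((1 - tanh (x / 2) ^ 2) / 2) :=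
    funext fun x => by rw [(hasDerivAt_Qs x).deriv]; ring
  rw [heq, h.2]
  exact ⟨h.1, by norm_num [intervalIntegral.integral_sub, integral_pow,
    intervalIntegral.integral_const_mul]⟩

theorem Efun_eq_of_integrable {u : ℝ → ℝ} (h2 : Integrable fun x => u x ^ 2)
    (h3 : Integrable fun x => u x ^ 3) :
    Efun u = 1 / 2 * (∫ x, u x ^ 2) + 1 / 3 * ∫ x, u x ^ 3 := by
  rw [Efun, integral_add (h2.div_const 2) (h3.div_const 3), integral_div, integral_div]
  ring

theorem Nfun_eq_of_integrable {u : ℝ → ℝ} (h1 : Integrable fun x => deriv u x ^ 2)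
    (h2 : Integrable fun x => u x ^ 2) :
    Nfun u = 1 / 2 * ((∫ x, deriv u x ^ 2) + ∫ x, u x ^ 2) := by
  rw [Nfun, integral_add h1 h2]

theorem integral_phic_pow (c : ℝ) (n : ℕ) :
    ∫ x, phic c x ^ n = (c - 1) ^ n / √((c - 1) / c) * ∫ x, Qs x ^ n := by
  simp only [phic, mul_pow]
  rw [integral_const_mul, Measure.integral_comp_mul_left (fun y => Qs y ^ n),
    abs_of_nonneg (inv_nonneg.2 (sqrt_nonneg _)), smul_eq_mul]
  ring

theorem integral_phic_cube (c : ℝ) :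
    ∫ x, phic c x ^ 3 = 6 / 5 * (c - 1) * ∫ x, phic c x ^ 2 := by
  rw [integral_phic_pow, integral_phic_pow, integral_Qs_cube.2, integral_Qs_sq.2]
  ring

theorem integrable_phic_pow {c : ℝ} (hc : 1 < c) {n : ℕ} (hQ : Integrable fun x => Qs x ^ n) :
    Integrable fun x => phic c x ^ n := by
  have hk : √((c - 1) / c) ≠ 0 := (sqrt_pos.2 (div_pos (by linarith) (by linarith))).ne'
  simp only [phic, mul_pow]
  exact (hQ.comp_mul_left' hk).const_mul _

theorem deriv_phic (c x : ℝ) :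
    deriv (phic c) x = (c - 1) * √((c - 1) / c) * deriv Qs (√((c - 1) / c) * x) := by
  rw [show phic c = fun x => (c - 1) * Qs (√((c - 1) / c) * x) from rfl, deriv_const_mul_field,
    deriv_comp_mul_left, smul_eq_mul, mul_assoc]

theorem integral_deriv_phic_sq (c : ℝ) :
    ∫ x, deriv (phic c) x ^ 2 = (c - 1) ^ 2 * √((c - 1) / c) * ∫ x, deriv Qs x ^ 2 := by
  have hk : √((c - 1) / c) ^ 2 * (√((c - 1) / c))⁻¹ = √((c - 1) / c) := by
    rw [sq, mul_self_mul_inv]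
  simp only [deriv_phic, mul_pow]
  rw [integral_const_mul, Measure.integral_comp_mul_left (fun y => deriv Qs y ^ 2),
    abs_of_nonneg (inv_nonneg.2 (sqrt_nonneg _)), smul_eq_mul]
  linear_combination ((c - 1) ^ 2 * ∫ x, deriv Qs x ^ 2) * hk

theorem integrable_deriv_phic_sq {c : ℝ} (hc : 1 < c)
    (hQ : Integrable fun x => deriv Qs x ^ 2) : Integrable fun x => deriv (phic c) x ^ 2 := by
  have hk : √((c - 1) / c) ≠ 0 := (sqrt_pos.2 (div_pos (by linarith) (by linarith))).ne'
  simp only [deriv_phic, mul_pow]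
  exact (hQ.comp_mul_left' hk).const_mul _

section SolitaryWave

variable {c : ℝ}

theorem integral_phic_sq (hc : 1 < c) :
    ∫ x, phic c x ^ 2 = (c - 1) ^ ((3 : ℝ) / 2) * c ^ ((1 : ℝ) / 2) * ∫ x, Qs x ^ 2 := by
  have hc1 : 0 < c - 1 := by linarith
  have ha := sqrt_pos.2 hc1
  have hb := sqrt_pos.2 (by linarith : 0 < c)
  rw [integral_phic_pow, sqrt_div hc1.le, ← sqrt_eq_rpow,
    show (3 : ℝ) / 2 = 1 + 1 / 2 by norm_num, rpow_add hc1, rpow_one, ← sqrt_eq_rpow]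
  field_simp
  rw [sq_sqrt hc1.le]

theorem integral_deriv_phic_sq_eq (hc : 1 < c) :
    ∫ x, deriv (phic c) x ^ 2 = 1 / 5 * ((c - 1) / c) * ∫ x, phic c x ^ 2 := by
  have hpos : 0 < (c - 1) / c := div_pos (by linarith) (by linarith)
  rw [integral_deriv_phic_sq, integral_phic_pow, integral_deriv_Qs_sq.2, integral_Qs_sq.2]
  have hk : 0 < √((c - 1) / c) := sqrt_pos.2 hpos
  field_simp
  rw [sq_sqrt hpos.le]
  field_simp

theorem Efun_phic (hc : 1 < c) :
    Efun (phic c) = 1 / 2 * (1 + 4 / 5 * (c - 1)) * ∫ x, phic c x ^ 2 := by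
  rw [Efun_eq_of_integrable (integrable_phic_pow hc integral_Qs_sq.1)
    (integrable_phic_pow hc integral_Qs_cube.1), integral_phic_cube]
  ring

theorem Nfun_phic (hc : 1 < c) :
    Nfun (phic c) = 1 / 2 * (1 / 5 * ((c - 1) / c) + 1) * ∫ x, phic c x ^ 2 := by
  rw [Nfun_eq_of_integrable (integrable_deriv_phic_sq hc integral_deriv_Qs_sq.1)
    (integrable_phic_pow hc integral_Qs_sq.1), integral_deriv_phic_sq_eq hc]
  ring

theorem hasDerivAt_integral_phic_sq (hc : 1 < c) :
    HasDerivAt (fun c => ∫ x, phic c x ^ 2)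
      ((3 / (2 * (c - 1)) + 1 / (2 * c)) * ∫ x, phic c x ^ 2) c := by
  have hc1 : 0 < c - 1 := by linarith
  have h := ((((hasDerivAt_id' c).sub_const 1).rpow_const (p := 3 / 2) (Or.inl hc1.ne')).mul
    ((hasDerivAt_id' c).rpow_const (p := 1 / 2) (Or.inl (by linarith)))).mul_const
    (∫ x, Qs x ^ 2)
  refine (h.congr_of_eventuallyEq ((eventually_gt_nhds hc).mono fun c' hc' =>
    integral_phic_sq hc')).congr_deriv ?_
  rw [integral_phic_sq hc, rpow_sub_one hc1.ne', rpow_sub_one (by linarith)]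
  field_simp

theorem hasDerivAt_Efun_phic (hc : 1 < c) :
    HasDerivAt (fun c => Efun (phic c))
      ((2 / 5 + 1 / 2 * (1 + 4 / 5 * (c - 1)) * (3 / (2 * (c - 1)) + 1 / (2 * c))) *
        ∫ x, phic c x ^ 2) c := by
  have h := (((((hasDerivAt_id' c).sub_const 1).const_mul (4 / 5)).const_add 1).const_mul
    (1 / 2)).mul (hasDerivAt_integral_phic_sq hc)
  exact (h.congr_of_eventuallyEq ((eventually_gt_nhds hc).mono fun c' hc' =>
    Efun_phic hc')).congr_deriv (by ring)

theorem hasDerivAt_Nfun_phic (hc : 1 < c) :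
    HasDerivAt (fun c => Nfun (phic c))
      ((1 / (10 * c ^ 2) + 1 / 2 * (1 / 5 * ((c - 1) / c) + 1) *
        (3 / (2 * (c - 1)) + 1 / (2 * c))) * ∫ x, phic c x ^ 2) c := by
  have hc0 : c ≠ 0 := by linarith
  have h := (((((hasDerivAt_id' c).sub_const 1).div (hasDerivAt_id' c) hc0).const_mul
    (1 / 5)).add_const 1).const_mul (1 / 2) |>.mul (hasDerivAt_integral_phic_sq hc)
  refine (h.congr_of_eventuallyEq ((eventually_gt_nhds hc).mono fun c' hc' =>
    Nfun_phic hc')).congr_deriv ?_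
  simp only [Pi.div_apply]
  field_simp
  ring

end SolitaryWave

/-- identities for `φ_c`, `E(φ_c)` and `N(φ_c)`. -/
theorem phic_energy_identities (c : ℝ) (hc : 1 < c) :
    ((∫ x : ℝ, (phic c x)^2) = (c - 1) ^ ((3:ℝ)/2) * c ^ ((1:ℝ)/2) * ∫ x : ℝ, (Qs x)^2) ∧
    ((∫ x : ℝ, (phic c x)^3) = (6/5) * (c - 1) * ∫ x : ℝ, (phic c x)^2) ∧
    ((∫ x : ℝ, (deriv (phic c) x)^2) = (1/5) * ((c - 1)/c) * ∫ x : ℝ, (phic c x)^2) ∧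
    (Efun (phic c) = (1/2) * (1 + (4/5) * (c - 1)) * ∫ x : ℝ, (phic c x)^2) ∧
    (Nfun (phic c) = (1/2) * ((1/5) * ((c - 1)/c) + 1) * ∫ x : ℝ, (phic c x)^2) ∧
    (Efun (phic c) - c * Nfun (phic c) = -(1/5) * (c - 1) * ∫ x : ℝ, (phic c x)^2) ∧
    (deriv (fun c' => Efun (phic c')) c = c * deriv (fun c' => Nfun (phic c')) c ∧
      0 < deriv (fun c' => Nfun (phic c')) c) := by
  have hc0 : 0 < c := by linarith
  have hc1 : 0 < c - 1 := by linarith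
  have hmass : 0 < ∫ x, phic c x ^ 2 := by
    rw [integral_phic_sq hc, integral_Qs_sq.2]
    exact mul_pos (mul_pos (rpow_pos_of_pos hc1 _) (rpow_pos_of_pos hc0 _)) (by norm_num)
  refine ⟨integral_phic_sq hc, integral_phic_cube c, integral_deriv_phic_sq_eq hc, Efun_phic hc,
    Nfun_phic hc, ?_, ?_, ?_⟩
  · rw [Efun_phic hc, Nfun_phic hc]
    field_simp
    ring
  · rw [(hasDerivAt_Efun_phic hc).deriv, (hasDerivAt_Nfun_phic hc).deriv]
    field_simp
    ring
  · rw [(hasDerivAt_Nfun_phic hc).deriv]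
    positivity
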